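/- Let p be an odd prime, m a positive integer, and let s be an integer with 0 ≤ s ≤ m such that m+s is odd and m+s ≥ 3. Let f : F_q → F_p be a weakly regular s-plateaued function with f(0) = 0, which is balanced (W_f(0) = 0). Then the extended code C̄_f' has length p^m + m + 2, dimension m + 2, and minimum distance at least p^m − p^{m−1} − p^{(m+s−1)/2} + 2. -/

import Mathlib

open Finset

noncomputable section

/-- ζ_p = exp(2πi/p). -/
def zetaP (p : ℕ) : ℂ := Complex.exp (2 * Real.pi * Complex.I / p)

/-- ζ_p^a for a ∈ F_p. -/
def eChar (p : ℕ) (a : ZMod p) : ℂ := zetaP p ^ a.val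

/-- Walsh transform of f : F_q → F_p : W_f(β) = Σ_x ζ_p^{f(x) − Tr(βx)}. -/
def walsh (p : ℕ) (F : Type) [Field F] [Fintype F] [Algebra (ZMod p) F]
    (f : F → ZMod p) (β : F) : ℂ :=
  ∑ x : F, eChar p (f x - Algebra.trace (ZMod p) F (β * x))

/-- √p* = √p if p ≡ 1 (mod 4), and i√p if p ≡ 3 (mod 4). -/
def sqrtPStar (p : ℕ) : ℂ :=
  if p % 4 = 1 then ((Real.sqrt p : ℝ) : ℂ) else Complex.I * ((Real.sqrt p : ℝ) : ℂ)

/-- f is s-plateaued: |W_f(β)|² ∈ {0, p^{m+s}} for all β. -/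
def IsPlateaued (p m s : ℕ) (F : Type) [Field F] [Fintype F] [Algebra (ZMod p) F]
    (f : F → ZMod p) : Prop :=
  ∀ β : F, Complex.normSq (walsh p F f β) = 0 ∨
    Complex.normSq (walsh p F f β) = (p : ℝ) ^ (m + s)

/-- Walsh support S_f = {β : |W_f(β)|² = p^{m+s}}. -/
def walshSupp (p m s : ℕ) (F : Type) [Field F] [Fintype F] [Algebra (ZMod p) F]
    (f : F → ZMod p) : Set F :=
  {β : F | Complex.normSq (walsh p F f β) = (p : ℝ) ^ (m + s)}

/-- f is weakly regular s-plateaued with sign ε and dual function f^*. -/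
def IsWeaklyRegularPlateaued (p m s : ℕ) (F : Type) [Field F] [Fintype F]
    [Algebra (ZMod p) F] (f : F → ZMod p) (ε : ℤ) (fstar : F → ZMod p) : Prop :=
  IsPlateaued p m s F f ∧ (ε = 1 ∨ ε = -1) ∧
  (∀ β : F, β ∉ walshSupp p m s F f → fstar β = 0) ∧
  (∀ β ∈ walshSupp p m s F f,
    walsh p F f β = (ε : ℂ) * sqrtPStar p ^ (m + s) * eChar p (fstar β))

/-- Walsh transform of a Boolean function, with values in ℤ. -/
def walsh2 (F : Type) [Field F] [Fintype F] [Algebra (ZMod 2) F]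
    (f : F → ZMod 2) (β : F) : ℤ :=
  ∑ x : F, (-1 : ℤ) ^ ((f x + Algebra.trace (ZMod 2) F (β * x)).val)

/-- A Boolean function is s-plateaued: W_f(β)² ∈ {0, 2^{m+s}} for all β. -/
def IsPlateaued2 (m s : ℕ) (F : Type) [Field F] [Fintype F] [Algebra (ZMod 2) F]
    (f : F → ZMod 2) : Prop :=
  ∀ β : F, walsh2 F f β ^ 2 = 0 ∨ walsh2 F f β ^ 2 = 2 ^ (m + s)

/-- Hamming weight. -/
def wtH {n : Type} [Fintype n] {K : Type} [Zero K] [DecidableEq K] (v : n → K) : ℕ :=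
  (Finset.univ.filter (fun i => v i ≠ 0)).card

/-- A code S has minimum distance d. -/
def hasMinDist {n : Type} [Fintype n] {K : Type} [Zero K] [DecidableEq K]
    (S : Set (n → K)) (d : ℕ) : Prop :=
  (∃ v ∈ S, v ≠ 0 ∧ wtH v = d) ∧ ∀ v ∈ S, v ≠ 0 → d ≤ wtH v

/-- The dual code of a set of vectors. -/
def dualCode {n : Type} [Fintype n] {K : Type} [Field K] (S : Set (n → K)) :
    Submodule K (n → K) where
  carrier := {u : n → K | ∀ v ∈ S, ∑ i, u i * v i = 0}
  add_mem' := by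
    intro u w hu hw v hv
    have h1 := hu v hv
    have h2 := hw v hv
    simp only [Pi.add_apply, add_mul, Finset.sum_add_distrib, h1, h2, add_zero]
  zero_mem' := by
    intro v hv
    simp
  smul_mem' := by
    intro c u hu v hv
    have h1 := hu v hv
    simp only [Pi.smul_apply, smul_eq_mul, mul_assoc, ← Finset.mul_sum, h1, mul_zero]

/-- The code C̄_f = {(a f(x) + Tr(bx) + c)_{x ∈ F_q}}. -/
def codeCbar (p : ℕ) (F : Type) [Field F] [Fintype F] [Algebra (ZMod p) F]
    (f : F → ZMod p) : Set (F → ZMod p) :=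
  {v : F → ZMod p | ∃ a c : ZMod p, ∃ b : F,
    v = fun x => a * f x + Algebra.trace (ZMod p) F (b * x) + c}

/-- The extended code C̄_f' ⊆ F_p^{m+2+q}: all vectors
(c, a, a_0, …, a_{m−1}, (a f(x) + Tr(bx) + a + c)_{x ∈ F_q}) with b = Σ a_i α^i. -/
def extCode (p m : ℕ) (F : Type) [Field F] [Fintype F] [Algebra (ZMod p) F]
    (f : F → ZMod p) (α : F) : Set (Fin (m + 2) ⊕ F → ZMod p) :=
  {v | ∃ c a : ZMod p, ∃ aa : Fin m → ZMod p,
    v = Sum.elim (Fin.cons c (Fin.cons a aa))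
      (fun x => a * f x +
        Algebra.trace (ZMod p) F ((∑ i : Fin m, aa i • α ^ (i : ℕ)) * x) + a + c)}

/-- The punctured code C_f^* indexed by the nonzero elements of F_q. -/
def codeCstar (p : ℕ) (F : Type) [Field F] [Fintype F] [Algebra (ZMod p) F]
    (f : F → ZMod p) : Set ({x : F // x ≠ 0} → ZMod p) :=
  {v | ∃ a : ZMod p, ∃ b : F,
    v = fun x => a * f x.val + Algebra.trace (ZMod p) F (b * x.val)}

end

/-!
Count the zeros of `a f(x) + Tr(bx) + a + c` by orthogonality of characters. For `a ≠ 0` the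
frequency `y ≠ 0` contributes the Galois conjugate `σ_{ya}(W_f(β))` with `β = -b/a`. As `m + s` is
odd, `(√p*)^(m+s) = ±(p*)^k g` with `g` the quadratic Gauss sum, so `W_f(β)` is an integer `N`,
`|N| ≤ p^k`, times `g ζ^{f*(β)}`; `σ_u` multiplies `g` by `η(u)`, and summing over `y` yields a
second Gauss sum. Hence `p · #zeros = p^m ± N p`, i.e. at most `p^(m-1) + p^k` zeros, and exactly
`p^(m-1)` when `b = 0` (balancedness) or when `a = 0 ≠ b` (a nonzero linear form; `b ≠ 0` because
`1, α, …, α^(m-1)` is a basis). The `m + 2` leading coordinates contribute the remaining weight.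
-/

lemma quadraticChar_abs_le_one {K : Type*} [Field K] [Fintype K] [DecidableEq K] (a : K) :
    |quadraticChar K a| ≤ 1 := by
  rcases quadraticChar_isQuadratic K a with h | h | h <;> simp [h]

section Characters

section NeZero

variable {p : ℕ} [NeZero p]

lemma zetaP_isPrimitiveRoot : IsPrimitiveRoot (zetaP p) p :=
  Complex.isPrimitiveRoot_exp p (NeZero.ne p)

variable (p) in
noncomputable def stdChar : AddChar (ZMod p) ℂ :=
  AddChar.zmodChar p zetaP_isPrimitiveRoot.pow_eq_one

lemma stdChar_apply (j : ZMod p) : stdChar p j = zetaP p ^ j.val :=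
  AddChar.zmodChar_apply _ j

lemma eChar_eq_stdChar (j : ZMod p) : eChar p j = stdChar p j :=
  (stdChar_apply j).symm

lemma stdChar_isPrimitive : (stdChar p).IsPrimitive :=
  AddChar.zmodChar_primitive_of_primitive_root p zetaP_isPrimitiveRoot

lemma sum_stdChar_mul_eq_sum_card_filter {X : Type*} [Fintype X] (T : X → ZMod p) (u : ZMod p) :
    ∑ x, stdChar p (u * T x) = ∑ j, (#{x | T x = j} : ℂ) * stdChar p (u * j) := by
  rw [← Finset.sum_fiberwise univ T]
  refine Finset.sum_congr rfl fun j _ => ?_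
  rw [Finset.sum_congr rfl fun x hx => by rw [(Finset.mem_filter.mp hx).2], Finset.sum_const,
    nsmul_eq_mul]

end NeZero

variable {p : ℕ} [Fact p.Prime]

variable (p) in
noncomputable def quadChar : MulChar (ZMod p) ℂ :=
  (quadraticChar (ZMod p)).ringHomComp (Int.castRingHom ℂ)

variable (p) in
noncomputable def stdGaussSum : ℂ := gaussSum (quadChar p) (stdChar p)

@[simp] lemma quadChar_apply (a : ZMod p) : quadChar p a = (quadraticChar (ZMod p) a : ℂ) := rfl

lemma quadChar_ne_one (hp2 : p ≠ 2) : quadChar p ≠ 1 :=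
  (MulChar.ringHomComp_ne_one_iff Int.cast_injective).mpr
    (quadraticChar_ne_one (by rwa [ZMod.ringChar_zmod_n]))

lemma quadChar_isQuadratic : (quadChar p).IsQuadratic :=
  (quadraticChar_isQuadratic (ZMod p)).comp _

lemma stdGaussSum_sq (hp2 : p ≠ 2) : stdGaussSum p ^ 2 = quadChar p (-1) * p := by
  have := gaussSum_sq (quadChar_ne_one hp2) quadChar_isQuadratic (stdChar_isPrimitive (p := p))
  rwa [ZMod.card] at this

/-- Galois conjugation `ζ ↦ ζ ^ u` fixes integer combinations of `p`-th roots of unity that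
vanish, because all primitive `p`-th roots of unity share the minimal polynomial `Φ_p`. -/
lemma sum_intCast_mul_stdChar_mul_eq_zero {d : ZMod p → ℤ}
    (h : ∑ j, (d j : ℂ) * stdChar p j = 0) {u : ZMod p} (hu : u ≠ 0) :
    ∑ j, (d j : ℂ) * stdChar p (u * j) = 0 := by
  have hp : p.Prime := Fact.out
  set D : Polynomial ℚ := ∑ j, Polynomial.C (d j : ℚ) * Polynomial.X ^ j.val
  have hD : ∀ z : ℂ, Polynomial.aeval z D = ∑ j, (d j : ℂ) * z ^ j.val := fun z => by
    simp [D, map_sum]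
  have hconj : IsPrimitiveRoot (zetaP p ^ u.val) p :=
    zetaP_isPrimitiveRoot.pow_of_coprime _ <| (Nat.coprime_comm.mp <|
      (Nat.Prime.coprime_iff_not_dvd hp).mpr <|
        Nat.not_dvd_of_pos_of_lt (Nat.pos_of_ne_zero (by simpa using hu)) (ZMod.val_lt u))
  have hmin : minpoly ℚ (zetaP p) = minpoly ℚ (zetaP p ^ u.val) := by
    rw [← Polynomial.cyclotomic_eq_minpoly_rat zetaP_isPrimitiveRoot hp.pos,
      ← Polynomial.cyclotomic_eq_minpoly_rat hconj hp.pos]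
  obtain ⟨Q, hQ⟩ := minpoly.dvd ℚ (zetaP p) <| by
    rw [hD]; simpa only [stdChar_apply] using h
  have hroot := hD (zetaP p ^ u.val)
  rw [hQ, map_mul, hmin, minpoly.aeval, zero_mul] at hroot
  rw [hroot]
  refine Finset.sum_congr rfl fun j _ => ?_
  rw [stdChar_apply, ZMod.val_mul, ← pow_eq_pow_mod _ zetaP_isPrimitiveRoot.pow_eq_one, pow_mul]

lemma sum_quadChar_mul_stdChar_mul (hp2 : p ≠ 2) (u : ZMod p) :
    ∑ y, quadChar p y * stdChar p (u * y) = quadChar p u * stdGaussSum p := by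
  rcases eq_or_ne u 0 with rfl | hu
  · simpa using MulChar.sum_eq_zero_of_ne_one (quadChar_ne_one hp2)
  · have := gaussSum_mulShift_eq (quadChar p) (stdChar p) (Units.mk0 u hu)
    rwa [quadChar_isQuadratic.inv, Units.val_mk0] at this

lemma sum_quadChar_sub_mul_stdChar (hp2 : p ≠ 2) (u c : ZMod p) :
    ∑ j, quadChar p (j - c) * stdChar p (u * j) =
      quadChar p u * stdGaussSum p * stdChar p (u * c) := by
  rw [← Fintype.sum_equiv (Equiv.addRight c) (fun y => quadChar p y * stdChar p (u * (y + c)))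
    _ (fun y => by simp), ← sum_quadChar_mul_stdChar_mul hp2, Finset.sum_mul]
  refine Finset.sum_congr rfl fun y _ => ?_
  rw [mul_add, AddChar.map_add_eq_mul, mul_assoc]

/-- Applying `ζ ↦ ζ ^ u` to `hT` multiplies the Gauss sum by `η(u)`. -/
lemma sum_stdChar_mul_of_sum_eq (hp2 : p ≠ 2) {X : Type*} [Fintype X] {T : X → ZMod p}
    {N : ℤ} {c : ZMod p} (hT : ∑ x, stdChar p (T x) = N * stdGaussSum p * stdChar p c)
    {u : ZMod p} (hu : u ≠ 0) :
    ∑ x, stdChar p (u * T x) = N * quadChar p u * stdGaussSum p * stdChar p (u * c) := by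
  have hgauss (v : ZMod p) : (N : ℂ) * quadChar p v * stdGaussSum p * stdChar p (v * c) =
      ∑ j, ((N * quadraticChar (ZMod p) (j - c) : ℤ) : ℂ) * stdChar p (v * j) := by
    rw [mul_assoc, mul_assoc, ← mul_assoc (quadChar p v), ← sum_quadChar_sub_mul_stdChar hp2,
      Finset.mul_sum]
    refine Finset.sum_congr rfl fun j _ => ?_
    push_cast
    rw [quadChar_apply, mul_assoc]
  have hdiff (v : ZMod p) : ∑ x, stdChar p (v * T x) -
      (N : ℂ) * quadChar p v * stdGaussSum p * stdChar p (v * c) =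
      ∑ j, ((#{x | T x = j} - N * quadraticChar (ZMod p) (j - c) : ℤ) : ℂ) * stdChar p (v * j) := by
    rw [sum_stdChar_mul_eq_sum_card_filter, hgauss, ← Finset.sum_sub_distrib]
    push_cast
    simp only [sub_mul]
  have h1 := hdiff 1
  simp only [one_mul, hT, map_one, mul_one, sub_self] at h1
  rw [← sub_eq_zero, hdiff u]
  exact sum_intCast_mul_stdChar_mul_eq_zero h1.symm hu

lemma card_filter_mul_add_eq_zero (hp2 : p ≠ 2) {X : Type*} [Fintype X] {T : X → ZMod p}
    {N : ℤ} {c : ZMod p} (hT : ∑ x, stdChar p (T x) = N * stdGaussSum p * stdChar p c)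
    {a : ZMod p} (ha : a ≠ 0) (e : ZMod p) :
    (#{x | a * T x + e = 0} : ℤ) * p =
      Fintype.card X + N * quadraticChar (ZMod p) (-a * (e + a * c)) * p := by
  set t := e + a * c
  have hfreq (y : ZMod p) : ∑ x, stdChar p (y * (a * T x + e)) =
      (if y = 0 then (Fintype.card X : ℂ) else 0) +
        N * quadChar p a * stdGaussSum p * (quadChar p y * stdChar p (t * y)) := by
    rcases eq_or_ne y 0 with rfl | hy
    · simp
    · simp only [mul_add, AddChar.map_add_eq_mul, ← Finset.sum_mul, ← mul_assoc,
        sum_stdChar_mul_of_sum_eq hp2 hT (mul_ne_zero hy ha), if_neg hy, zero_add, map_mul]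
      rw [show t * y = y * a * c + y * e by ring, AddChar.map_add_eq_mul]
      ring
  have hcount : (#{x | a * T x + e = 0} : ℂ) * p = ∑ y, ∑ x, stdChar p (y * (a * T x + e)) := by
    rw [Finset.sum_comm, Finset.natCast_card_filter, Finset.sum_mul]
    refine Finset.sum_congr rfl fun x _ => ?_
    rw [AddChar.sum_mulShift _ stdChar_isPrimitive, ZMod.card]
    split_ifs <;> simp
  have hsq := stdGaussSum_sq (p := p) hp2
  apply Int.cast_injective (α := ℂ)
  rw [show -a * t = -1 * a * t by ring]
  push_cast
  rw [hcount, Finset.sum_congr rfl fun y _ => hfreq y, Finset.sum_add_distrib, ← Finset.mul_sum,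
    sum_quadChar_mul_stdChar_mul hp2, Finset.sum_ite_eq', if_pos (Finset.mem_univ _)]
  simp only [map_mul, quadChar_apply] at hsq ⊢
  push_cast
  linear_combination (N : ℂ) * quadraticChar (ZMod p) a * quadraticChar (ZMod p) t * hsq

end Characters

section Weight

variable {n K : Type} [Fintype n] [Zero K] [DecidableEq K]

lemma wtH_eq_hammingNorm (v : n → K) : wtH v = hammingNorm v := rfl

lemma wtH_sumElim {n' : Type} [Fintype n'] (u : n → K) (w : n' → K) :
    wtH (Sum.elim u w) = wtH u + wtH w := by
  simp only [wtH, Finset.card_filter, Fintype.sum_sum_type, Sum.elim_inl, Sum.elim_inr]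
  rfl

lemma wtH_cons {k : ℕ} (x : K) (v : Fin k → K) :
    wtH (Fin.cons x v : Fin (k + 1) → K) = (if x = 0 then 0 else 1) + wtH v := by
  simp only [wtH, Finset.card_filter, Fin.sum_univ_succ, Fin.cons_zero, Fin.cons_succ, ite_not]

lemma wtH_add_card_filter_eq_zero (v : n → K) : wtH v + #{i | v i = 0} = Fintype.card n := by
  rw [wtH, add_comm, Finset.card_filter_add_card_filter_not, Finset.card_univ]

end Weight

section Plateaued

variable {p : ℕ} [Fact p.Prime]

lemma sqrtPStar_sq (hp2 : p ≠ 2) : sqrtPStar p ^ 2 = quadChar p (-1) * p := by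
  have hp : p % 2 = 1 := Nat.odd_iff.mp ((Fact.out : p.Prime).odd_of_ne_two hp2)
  have hsqrt : ((Real.sqrt p : ℝ) : ℂ) ^ 2 = p := by
    rw [← Complex.ofReal_pow, Real.sq_sqrt (Nat.cast_nonneg p), Complex.ofReal_natCast]
  rw [quadChar_apply, quadraticChar_neg_one (by rwa [ZMod.ringChar_zmod_n]), ZMod.card,
    ZMod.χ₄_nat_eq_if_mod_four, if_neg (by omega), sqrtPStar]
  split_ifs <;> simp [mul_pow, hsqrt]

lemma exists_sqrtPStar_eq_intCast_mul_stdGaussSum (hp2 : p ≠ 2) :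
    ∃ δ : ℤ, |δ| = 1 ∧ sqrtPStar p = δ * stdGaussSum p := by
  rcases sq_eq_sq_iff_eq_or_eq_neg.mp ((sqrtPStar_sq hp2).trans (stdGaussSum_sq hp2).symm)
    with h | h
  exacts [⟨1, by simp, by simp [h]⟩, ⟨-1, by simp, by simp [h]⟩]

variable {F : Type} [Field F] [Fintype F] [Algebra (ZMod p) F]

lemma walsh_eq_sum_stdChar (f : F → ZMod p) (β : F) :
    walsh p F f β = ∑ x, stdChar p (f x - Algebra.trace (ZMod p) F (β * x)) := by
  simp only [walsh, eChar_eq_stdChar]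

/-- `(√p*)^(2k+1) = (p*)^k · √p*` and `√p* = ±g`. -/
lemma IsWeaklyRegularPlateaued.exists_walsh_eq (hp2 : p ≠ 2) {m s k : ℕ} {f : F → ZMod p}
    {ε : ℤ} {fstar : F → ZMod p} (hwr : IsWeaklyRegularPlateaued p m s F f ε fstar)
    (hk : m + s = 2 * k + 1) (β : F) :
    ∃ N : ℤ, |N| ≤ p ^ k ∧ walsh p F f β = N * stdGaussSum p * stdChar p (fstar β) := by
  obtain ⟨hpl, hε, -, hW⟩ := hwr
  by_cases hβ : β ∈ walshSupp p m s F f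
  · obtain ⟨δ, hδ, hsqrt⟩ := exists_sqrtPStar_eq_intCast_mul_stdGaussSum hp2
    have hη : |quadraticChar (ZMod p) (-1)| = 1 := by
      rcases quadraticChar_dichotomy (F := ZMod p) (neg_ne_zero.mpr one_ne_zero) with h | h <;>
        simp [h]
    refine ⟨ε * (quadraticChar (ZMod p) (-1) * p) ^ k * δ, ?_, ?_⟩
    · have hε' : |ε| = 1 := by rcases hε with rfl | rfl <;> rfl
      rw [abs_mul, abs_mul, abs_pow, abs_mul, hη, hδ, hε', Nat.abs_cast, one_mul, one_mul, mul_one]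
    · rw [hW β hβ, hk, pow_succ, pow_mul, sqrtPStar_sq hp2, hsqrt, eChar_eq_stdChar,
        quadChar_apply]
      push_cast
      ring
  · refine ⟨0, by positivity, ?_⟩
    rcases hpl β with h | h
    · simpa using h
    · exact absurd h hβ

end Plateaued

section Codewords

variable {p : ℕ} [Fact p.Prime] {F : Type} [Field F] [Algebra (ZMod p) F]

lemma codeword_eq_mul_add {a : ZMod p} (ha : a ≠ 0) (f : F → ZMod p) (b : F) (c : ZMod p)
    (x : F) :
    a * f x + Algebra.trace (ZMod p) F (b * x) + a + c =
      a * (f x - Algebra.trace (ZMod p) F (-((algebraMap (ZMod p) F a)⁻¹ * b) * x)) +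
        (a + c) := by
  have hA : algebraMap (ZMod p) F a ≠ 0 := by simpa using ha
  have h : a * Algebra.trace (ZMod p) F (-((algebraMap (ZMod p) F a)⁻¹ * b) * x) =
      -Algebra.trace (ZMod p) F (b * x) := by
    rw [← smul_eq_mul, ← map_smul, Algebra.smul_def, ← map_neg]
    congr 1
    field_simp
  linear_combination h

variable [Fintype F]

lemma sum_stdChar_trace_mul_eq_zero {b : F} (hb : b ≠ 0) :
    ∑ x, stdChar p (Algebra.trace (ZMod p) F (b * x)) = 0 := by
  classical
  set φ := (stdChar p).compAddMonoidHom (Algebra.trace (ZMod p) F).toAddMonoidHom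
  have hφ : φ ≠ 1 := by
    obtain ⟨j, hj⟩ := AddChar.ne_one_iff.mp
      (AddChar.mulShift_one (stdChar p) ▸ stdChar_isPrimitive one_ne_zero)
    obtain ⟨z, rfl⟩ := Algebra.trace_surjective (ZMod p) F j
    exact AddChar.ne_one_iff.mpr ⟨z, hj⟩
  have := AddChar.sum_mulShift b (AddChar.IsPrimitive.of_ne_one hφ)
  simpa [φ, if_neg hb, mul_comm] using this

lemma card_filter_trace_mul_add_eq_zero (hp2 : p ≠ 2) {b : F} (hb : b ≠ 0) (c : ZMod p) :
    #{x | Algebra.trace (ZMod p) F (b * x) + c = 0} * p = Fintype.card F := by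
  have h := card_filter_mul_add_eq_zero hp2 (N := 0) (c := 0)
    (by simpa using sum_stdChar_trace_mul_eq_zero hb) one_ne_zero c
  simp only [one_mul, zero_mul, add_zero] at h
  exact_mod_cast h

lemma card_filter_codeword_mul_eq (hp2 : p ≠ 2) {f : F → ZMod p} {a : ZMod p} (ha : a ≠ 0)
    (b : F) (c : ZMod p) {N : ℤ} {c₀ : ZMod p}
    (hW : walsh p F f (-((algebraMap (ZMod p) F a)⁻¹ * b)) =
      N * stdGaussSum p * stdChar p c₀) :
    (#{x | a * f x + Algebra.trace (ZMod p) F (b * x) + a + c = 0} : ℤ) * p =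
      Fintype.card F + N * quadraticChar (ZMod p) (-a * (a + c + a * c₀)) * p := by
  simp_rw [codeword_eq_mul_add ha f b c]
  exact card_filter_mul_add_eq_zero hp2 ((walsh_eq_sum_stdChar f _).symm.trans hW) ha _

lemma card_filter_codeword_mul_eq_of_walsh_zero_eq_zero (hp2 : p ≠ 2) {f : F → ZMod p}
    (hbal : walsh p F f 0 = 0) {a : ZMod p} (ha : a ≠ 0) (c : ZMod p) :
    #{x | a * f x + a + c = 0} * p = Fintype.card F := by
  have h := card_filter_codeword_mul_eq hp2 ha (0 : F) c (N := 0) (c₀ := 0)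
    (by simpa using hbal)
  simp only [zero_mul, map_zero, add_zero] at h
  exact_mod_cast h

lemma IsWeaklyRegularPlateaued.card_filter_codeword_mul_le (hp2 : p ≠ 2) {m s k : ℕ}
    {f : F → ZMod p} {ε : ℤ} {fstar : F → ZMod p}
    (hwr : IsWeaklyRegularPlateaued p m s F f ε fstar) (hk : m + s = 2 * k + 1)
    {a : ZMod p} (ha : a ≠ 0) (b : F) (c : ZMod p) :
    #{x | a * f x + Algebra.trace (ZMod p) F (b * x) + a + c = 0} * p ≤
      Fintype.card F + p ^ (k + 1) := by
  set β₀ := -((algebraMap (ZMod p) F a)⁻¹ * b)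
  obtain ⟨N, hN, hW⟩ := hwr.exists_walsh_eq hp2 hk β₀
  set η := quadraticChar (ZMod p) (-a * (a + c + a * fstar β₀))
  have herr : (N * η * p : ℤ) ≤ p ^ k * p :=
    calc (N * η * p : ℤ) ≤ |N * η * p| := le_abs_self _
      _ = |N| * |η| * p := by rw [abs_mul, abs_mul, Nat.abs_cast]
      _ ≤ p ^ k * 1 * p := by gcongr; exact quadraticChar_abs_le_one _
      _ = p ^ k * p := by ring
  zify
  rw [card_filter_codeword_mul_eq hp2 ha b c hW, pow_succ]
  linarith

end Codewords

lemma linearIndependent_pow_of_forall_eq_pow {K L : Type*} [Field K] [Field L] [Algebra K L]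
    [FiniteDimensional K L] {α : L} (hα : ∀ x : L, x ≠ 0 → ∃ k : ℕ, x = α ^ k) :
    LinearIndependent K fun i : Fin (Module.finrank K L) => α ^ (i : ℕ) := by
  have hadj : IntermediateField.adjoin K {α} = ⊤ := by
    refine eq_top_iff.mpr fun x _ => ?_
    rcases eq_or_ne x 0 with rfl | hx
    · exact zero_mem _
    · obtain ⟨k, rfl⟩ := hα x hx
      exact pow_mem (IntermediateField.mem_adjoin_simple_self K α) k
  have hdeg : (minpoly K α).natDegree = Module.finrank K L := by
    rw [← IntermediateField.adjoin.finrank (IsIntegral.of_finite K α), hadj,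
      IntermediateField.finrank_top']
  rw [← hdeg]
  exact linearIndependent_pow α

lemma ncard_extCode (p m : ℕ) [NeZero p] (F : Type) [Field F] [Fintype F] [Algebra (ZMod p) F]
    (f : F → ZMod p) (α : F) : (extCode p m F f α).ncard = p ^ (m + 2) := by
  set Φ : ZMod p × ZMod p × (Fin m → ZMod p) → (Fin (m + 2) ⊕ F → ZMod p) := fun t =>
    Sum.elim (Fin.cons t.1 (Fin.cons t.2.1 t.2.2)) fun x => t.2.1 * f x +
      Algebra.trace (ZMod p) F ((∑ i : Fin m, t.2.2 i • α ^ (i : ℕ)) * x) + t.2.1 + t.1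
  have hrange : extCode p m F f α = Set.range Φ := by
    ext v
    constructor
    · rintro ⟨c, a, aa, rfl⟩
      exact ⟨(c, a, aa), rfl⟩
    · rintro ⟨⟨c, a, aa⟩, rfl⟩
      exact ⟨c, a, aa, rfl⟩
  have hinj : Function.Injective Φ := by
    rintro ⟨c, a, aa⟩ ⟨c', a', aa'⟩ h
    have hprefix := congrArg (· ∘ Sum.inl) h
    simp only [Φ, Sum.elim_comp_inl, Fin.cons_inj] at hprefix
    obtain ⟨rfl, rfl, rfl⟩ := hprefix
    rfl
  rw [hrange, Set.ncard_range_of_injective hinj, Nat.card_eq_fintype_card, Fintype.card_prod,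
    Fintype.card_prod, Fintype.card_fun, ZMod.card, Fintype.card_fin]
  ring

section ExtendedCode

variable {p : ℕ} [Fact p.Prime] {F : Type} [Field F] [Fintype F] [Algebra (ZMod p) F]

lemma finrank_eq_of_card_eq_pow {m : ℕ} (hcard : Fintype.card F = p ^ m) :
    Module.finrank (ZMod p) F = m := by
  have h := Module.card_eq_pow_finrank (K := ZMod p) (V := F)
  rw [ZMod.card, hcard] at h
  exact Nat.pow_right_injective (Fact.out : p.Prime).two_le h.symm

lemma eq_zero_of_sum_smul_pow_eq_zero {m : ℕ} (hcard : Fintype.card F = p ^ m) {α : F}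
    (hα : ∀ x : F, x ≠ 0 → ∃ k : ℕ, x = α ^ k) {aa : Fin m → ZMod p}
    (h : ∑ i, aa i • α ^ (i : ℕ) = 0) : aa = 0 := by
  have hli := linearIndependent_pow_of_forall_eq_pow (K := ZMod p) hα
  rw [finrank_eq_of_card_eq_pow hcard] at hli
  exact funext <| Fintype.linearIndependent_iff.mp hli aa h

lemma IsWeaklyRegularPlateaued.card_filter_codeword_add_two_le (hp2 : p ≠ 2) {m s k : ℕ}
    (hm : 1 ≤ m) (hk : m + s = 2 * k + 1) (hcard : Fintype.card F = p ^ m) {α : F}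
    (hα : ∀ x : F, x ≠ 0 → ∃ k : ℕ, x = α ^ k) {f : F → ZMod p} {ε : ℤ} {fstar : F → ZMod p}
    (hwr : IsWeaklyRegularPlateaued p m s F f ε fstar) (hbal : walsh p F f 0 = 0)
    {c a : ZMod p} {aa : Fin m → ZMod p} (hne : ¬(c = 0 ∧ a = 0 ∧ aa = 0)) :
    #{x | a * f x + Algebra.trace (ZMod p) F ((∑ i, aa i • α ^ (i : ℕ)) * x) + a + c = 0} + 2 ≤
      p ^ (m - 1) + p ^ k + wtH (Fin.cons c (Fin.cons a aa) : Fin (m + 2) → ZMod p) := by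
  have hp : p.Prime := Fact.out
  set b := ∑ i, aa i • α ^ (i : ℕ)
  set Z := #{x | a * f x + Algebra.trace (ZMod p) F (b * x) + a + c = 0}
  have hpow : p ^ m = p ^ (m - 1) * p := by rw [← pow_succ]; congr 1; omega
  have hk1 : 1 ≤ p ^ k := Nat.one_le_pow _ _ hp.pos
  have hm1 : 1 ≤ p ^ (m - 1) := Nat.one_le_pow _ _ hp.pos
  rw [wtH_cons, wtH_cons]
  rcases eq_or_ne aa 0 with rfl | haa <;> rcases eq_or_ne a 0 with rfl | ha
  · have hc : c ≠ 0 := fun hc => hne ⟨hc, rfl, rfl⟩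
    have hZ : Z = 0 := by simp [Z, b, hc]
    simp only [hZ, if_neg hc]
    omega
  · have hZ : Z * p = p ^ m := by
      rw [← hcard, ← card_filter_codeword_mul_eq_of_walsh_zero_eq_zero hp2 hbal ha c]
      simp [Z, b]
    have := Nat.eq_of_mul_eq_mul_right hp.pos (hZ.trans hpow)
    simp only [if_neg ha]
    omega
  · have hb : b ≠ 0 := fun h => haa (eq_zero_of_sum_smul_pow_eq_zero hcard hα h)
    have hZ : Z * p = p ^ m := by
      rw [← hcard, ← card_filter_trace_mul_add_eq_zero hp2 hb c]
      simp [Z]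
    have := Nat.eq_of_mul_eq_mul_right hp.pos (hZ.trans hpow)
    have hw : 0 < wtH aa := by rwa [wtH_eq_hammingNorm, hammingNorm_pos_iff]
    omega
  · have hZ : Z * p ≤ (p ^ (m - 1) + p ^ k) * p := by
      rw [add_mul, ← hpow, ← pow_succ, ← hcard]
      exact hwr.card_filter_codeword_mul_le hp2 hk ha b c
    have := Nat.le_of_mul_le_mul_right hZ hp.pos
    have hw : 0 < wtH aa := by rwa [wtH_eq_hammingNorm, hammingNorm_pos_iff]
    simp only [if_neg ha]
    omega

lemma IsWeaklyRegularPlateaued.le_wtH_of_mem_extCode (hp2 : p ≠ 2) {m s : ℕ} (hm : 1 ≤ m)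
    (hs : s ≤ m) (hpar : Odd (m + s)) (hcard : Fintype.card F = p ^ m) {α : F}
    (hα : ∀ x : F, x ≠ 0 → ∃ k : ℕ, x = α ^ k) {f : F → ZMod p} {ε : ℤ} {fstar : F → ZMod p}
    (hwr : IsWeaklyRegularPlateaued p m s F f ε fstar) (hbal : walsh p F f 0 = 0)
    {v : Fin (m + 2) ⊕ F → ZMod p} (hv : v ∈ extCode p m F f α) (hv0 : v ≠ 0) :
    p ^ m - p ^ (m - 1) - p ^ ((m + s - 1) / 2) + 2 ≤ wtH v := by
  have hp : p.Prime := Fact.out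
  obtain ⟨k, hk⟩ := hpar
  obtain ⟨c, a, aa, rfl⟩ := hv
  have hne : ¬(c = 0 ∧ a = 0 ∧ aa = 0) := by
    rintro ⟨rfl, rfl, rfl⟩
    refine hv0 (funext fun j => ?_)
    rcases j with j | x
    · exact Fin.cases rfl (Fin.cases rfl fun _ => rfl) j
    · simp
  have hzeros := hwr.card_filter_codeword_add_two_le hp2 hm hk hcard hα hbal hne
  have htail := wtH_add_card_filter_eq_zero
    fun x => a * f x + Algebra.trace (ZMod p) F ((∑ i, aa i • α ^ (i : ℕ)) * x) + a + c
  rw [hcard] at htail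
  have hkm : p ^ k ≤ p ^ (m - 1) := Nat.pow_le_pow_right hp.pos (by omega)
  have hdouble : 2 * p ^ (m - 1) ≤ p ^ m := by
    rw [show p ^ m = p * p ^ (m - 1) by rw [← pow_succ']; congr 1; omega]
    exact Nat.mul_le_mul_right _ hp.two_le
  rw [show (m + s - 1) / 2 = k by omega, wtH_sumElim]
  omega

end ExtendedCode

theorem statement9_general (p m s : ℕ) [Fact p.Prime] (hp2 : p ≠ 2) (hm : 1 ≤ m) (hs : s ≤ m)
    (hpar : Odd (m + s))
    (F : Type) [Field F] [Fintype F] [Algebra (ZMod p) F]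
    (hcard : Fintype.card F = p ^ m)
    (α : F) (hα : ∀ x : F, x ≠ 0 → ∃ k : ℕ, x = α ^ k)
    (f : F → ZMod p) (ε : ℤ) (fstar : F → ZMod p)
    (hwr : IsWeaklyRegularPlateaued p m s F f ε fstar)
    (hbal : walsh p F f 0 = 0) :
    Fintype.card (Fin (m + 2) ⊕ F) = p ^ m + m + 2 ∧
    Set.ncard (extCode p m F f α) = p ^ (m + 2) ∧
    (∀ v ∈ extCode p m F f α, v ≠ 0 →
      p ^ m - p ^ (m - 1) - p ^ ((m + s - 1) / 2) + 2 ≤ wtH v) := by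
  refine ⟨?_, ncard_extCode p m F f α, fun v hv hv0 =>
    hwr.le_wtH_of_mem_extCode hp2 hm hs hpar hcard hα hbal hv hv0⟩
  rw [Fintype.card_sum, Fintype.card_fin, hcard]
  ring

theorem statement9 (p m s : ℕ) [Fact p.Prime] (hp2 : p ≠ 2) (hm : 1 ≤ m) (hs : s ≤ m)
    (hpar : Odd (m + s)) (hms : 3 ≤ m + s)
    (F : Type) [Field F] [Fintype F] [Algebra (ZMod p) F]
    (hcard : Fintype.card F = p ^ m)
    (α : F) (hα : ∀ x : F, x ≠ 0 → ∃ k : ℕ, x = α ^ k)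
    (f : F → ZMod p) (hf0 : f 0 = 0) (ε : ℤ) (fstar : F → ZMod p)
    (hwr : IsWeaklyRegularPlateaued p m s F f ε fstar)
    (hbal : walsh p F f 0 = 0) :
    Fintype.card (Fin (m + 2) ⊕ F) = p ^ m + m + 2 ∧
    Set.ncard (extCode p m F f α) = p ^ (m + 2) ∧
    (∀ v ∈ extCode p m F f α, v ≠ 0 →
      p ^ m - p ^ (m - 1) - p ^ ((m + s - 1) / 2) + 2 ≤ wtH v) :=
  statement9_general p m s hp2 hm hs hpar F hcard α hα f ε fstar hwr hbal
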